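/- arXiv:2107.07932 — 3 statements merged into one kernel-verified Lean document; each statement's English description precedes it below -/
import Mathlib

section
/- For every a > 0, the upper ν-partition entropy satisfies h_a ≤ s_{am} (Lemma 2.6). -/
/-!
Fix `s > 0` with `β_ν(s) ≤ a m s` and `ε > 0`. For large `t`, stop every point of the unit cube at
the first dyadic cube `C` of its chain with `𝔍_a(C) < 1/t`; these stopping cubes partition the unit
cube. A stopping cube other than the unit cube is one of the `2^m` children of a heavy cube `C'`
(one with `𝔍_a(C') ≥ 1/t`). A heavy cube of generation `k` has `ν(C') ≥ 2^{amk}/t`, and such cubes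
exist only when `2^{amk} ≤ t`, so Markov's inequality bounds their number by
`t^s 2^{-amks} ∑_{C ∈ 𝒟_k} ν(C)^s ≲ t^s 2^{amkε} ≤ t^{s+ε}`. Summing over the `O(log t)` generations
gives `𝒩_a(t) ≲ t^{s+2ε}`, so `h_a ≤ s`, and `h_a ≤ s_{am}` follows on taking the infimum over `s`.
-/

open MeasureTheory Filter
open scoped ENNReal

noncomputable section

/-- The half-open unit cube `(0,1]^m`. -/
def unitCube (m : ℕ) : Set (Fin m → ℝ) := {x | ∀ i, x i ∈ Set.Ioc (0 : ℝ) 1}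

/-- The half-open dyadic cube of generation `n` indexed by `l ∈ ℤ^m`. -/
def dyadicCube (m n : ℕ) (l : Fin m → ℤ) : Set (Fin m → ℝ) :=
  {x | ∀ i, x i ∈ Set.Ioc ((l i : ℝ) / 2 ^ n) (((l i : ℝ) + 1) / 2 ^ n)}

/-- `β_n^ν(s) = log (∑_{C ∈ 𝒟_n} ν(C)^s) / log (2^n)`, the sum running over all
dyadic cubes of generation `n` with positive `ν`-measure. -/
def betaN (m : ℕ) (ν : Measure (Fin m → ℝ)) (n : ℕ) (s : ℝ) : ℝ :=
  Real.log (∑' l : {l : Fin m → ℤ // 0 < ν (dyadicCube m n l)},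
      (ν (dyadicCube m n l.1)).toReal ^ s) / Real.log ((2 : ℝ) ^ n)

/-- The `L^q`-spectrum `β_ν(s) = limsup_n β_n^ν(s)`. -/
def lqSpectrum (m : ℕ) (ν : Measure (Fin m → ℝ)) (s : ℝ) : ℝ :=
  limsup (fun n => betaN m ν n s) atTop

/-- `s_b = inf {s > 0 : β_ν(s) - b·s ≤ 0}`. -/
def sb (m : ℕ) (ν : Measure (Fin m → ℝ)) (b : ℝ) : ℝ :=
  sInf {s : ℝ | 0 < s ∧ lqSpectrum m ν s - b * s ≤ 0}

/-- A half-open axis-parallel cube `∏_i (a_i, a_i + h]` with `h > 0`. -/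
def IsHalfOpenCube {m : ℕ} (Q : Set (Fin m → ℝ)) : Prop :=
  ∃ (a : Fin m → ℝ) (h : ℝ), 0 < h ∧ Q = {x | ∀ i, x i ∈ Set.Ioc (a i) (a i + h)}

/-- A finite partition of the unit cube into half-open axis-parallel subcubes. -/
def IsCubePartition (m : ℕ) (P : Finset (Set (Fin m → ℝ))) : Prop :=
  (∀ Q ∈ P, IsHalfOpenCube Q ∧ Q ⊆ unitCube m) ∧
    (P : Set (Set (Fin m → ℝ))).PairwiseDisjoint id ∧
    ⋃₀ (P : Set (Set (Fin m → ℝ))) = unitCube m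

/-- `𝔍_a(Q) = Λ(Q)^a · ν(Q)`. -/
def Jfun (m : ℕ) (ν : Measure (Fin m → ℝ)) (a : ℝ) (Q : Set (Fin m → ℝ)) : ℝ :=
  (volume Q).toReal ^ a * (ν Q).toReal

/-- `𝒩_a(t)`: the minimal cardinality of a partition of the unit cube into half-open
cubes `Q`, all satisfying `𝔍_a(Q) < 1/t`. -/
def partCount (m : ℕ) (ν : Measure (Fin m → ℝ)) (a t : ℝ) : ℕ :=
  sInf {k : ℕ | ∃ P : Finset (Set (Fin m → ℝ)), IsCubePartition m P ∧
    (∀ Q ∈ P, Jfun m ν a Q < 1 / t) ∧ P.card = k}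

/-- The upper `ν`-partition entropy `h_a = limsup_{t → ∞} log 𝒩_a(t) / log t`. -/
def hPart (m : ℕ) (ν : Measure (Fin m → ℝ)) (a : ℝ) : ℝ≥0∞ :=
  limsup (fun t : ℝ => ENNReal.ofReal (Real.log (partCount m ν a t) / Real.log t)) atTop

theorem Nat.sInf_eq_of_forall_le_iff {p q : ℕ → Prop} (hp : ∃ n, p n)
    (hpq : ∀ k ≤ sInf {n | p n}, q k ↔ p k) : sInf {n | q n} = sInf {n | p n} := by
  have hpN : p (sInf {n | p n}) := Nat.sInf_mem hp
  refine le_antisymm (Nat.sInf_le ((hpq _ le_rfl).mpr hpN)) (le_csInf ⟨_, (hpq _ le_rfl).mpr hpN⟩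
    fun k hk => not_lt.mp fun hlt => Nat.notMem_of_lt_sInf hlt ((hpq k hlt.le).mp hk))

theorem limsup_ofReal_log_div_log_le {f : ℝ → ℕ} {C p η : ℝ} (hp : 0 ≤ p) (hη : 0 < η)
    (hf : ∀ᶠ t in atTop, (f t : ℝ) ≤ C * t ^ p) :
    limsup (fun t => ENNReal.ofReal (Real.log (f t) / Real.log t)) atTop ≤
      ENNReal.ofReal (p + η) := by
  refine limsup_le_of_le (by isBoundedDefault) ?_
  filter_upwards [hf, Real.tendsto_log_atTop.eventually_ge_atTop (Real.log C / η),
    eventually_gt_atTop 1] with t hft hlog ht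
  have hlogt : 0 < Real.log t := Real.log_pos ht
  refine ENNReal.ofReal_le_ofReal ((div_le_iff₀ hlogt).mpr ?_)
  rcases (f t).eq_zero_or_pos with h0 | h0
  · rw [h0, Nat.cast_zero, Real.log_zero]; positivity
  have hf1 : (1 : ℝ) ≤ f t := by exact_mod_cast h0
  have hC : 0 < C := pos_of_mul_pos_left ((zero_lt_one.trans_le hf1).trans_le hft)
    (Real.rpow_nonneg (by linarith) p)
  calc Real.log (f t) ≤ Real.log (C * t ^ p) := Real.log_le_log (by linarith) hft
    _ = Real.log C + p * Real.log t := by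
        rw [Real.log_mul hC.ne' (Real.rpow_pos_of_pos (by linarith) p).ne',
          Real.log_rpow (by linarith)]
    _ ≤ (p + η) * Real.log t := by rw [div_le_iff₀ hη] at hlog; linarith

theorem ENNReal.le_ofReal_of_forall_lt {x : ℝ≥0∞} {y : ℝ}
    (h : ∀ z, y < z → x ≤ ENNReal.ofReal z) : x ≤ ENNReal.ofReal y := by
  refine ENNReal.le_of_forall_pos_le_add fun η hη _ => ?_
  calc x ≤ ENNReal.ofReal (y + η) := h _ (lt_add_of_pos_right y hη)
    _ ≤ ENNReal.ofReal y + ENNReal.ofReal η := ENNReal.ofReal_add_le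
    _ = ENNReal.ofReal y + η := by rw [ENNReal.ofReal_coe_nnreal]

section

variable {m : ℕ}

theorem mem_dyadicCube_iff {n : ℕ} {l : Fin m → ℤ} {x : Fin m → ℝ} :
    x ∈ dyadicCube m n l ↔ ∀ i, (l i : ℝ) < 2 ^ n * x i ∧ 2 ^ n * x i ≤ l i + 1 := by
  have h2 : (0 : ℝ) < 2 ^ n := by positivity
  simp only [dyadicCube, Set.mem_ofPred_eq, Set.mem_Ioc, div_lt_iff₀' h2, le_div_iff₀' h2]

theorem dyadicCube_eq_pi (n : ℕ) (l : Fin m → ℤ) :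
    dyadicCube m n l = Set.univ.pi fun i => Set.Ioc ((l i : ℝ) / 2 ^ n) ((l i + 1) / 2 ^ n) := by
  ext x; simp [dyadicCube]

theorem measurableSet_dyadicCube (n : ℕ) (l : Fin m → ℤ) : MeasurableSet (dyadicCube m n l) := by
  rw [dyadicCube_eq_pi]
  exact MeasurableSet.univ_pi fun _ => measurableSet_Ioc

theorem isHalfOpenCube_dyadicCube (n : ℕ) (l : Fin m → ℤ) : IsHalfOpenCube (dyadicCube m n l) :=
  ⟨fun i => (l i : ℝ) / 2 ^ n, 1 / 2 ^ n, by positivity, by ext x; simp [dyadicCube, add_div]⟩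

theorem volume_dyadicCube (n : ℕ) (l : Fin m → ℤ) :
    (volume (dyadicCube m n l)).toReal = ((2 : ℝ) ^ n)⁻¹ ^ m := by
  have hlen : ∀ i, ((l i : ℝ) + 1) / 2 ^ n - l i / 2 ^ n = ((2 : ℝ) ^ n)⁻¹ := fun i => by ring
  rw [dyadicCube_eq_pi, Real.volume_pi_Ioc]
  simp [hlen]

def dyadicIndex (n : ℕ) (x : Fin m → ℝ) : Fin m → ℤ := fun i => ⌈(2 : ℝ) ^ n * x i⌉ - 1

theorem mem_dyadicCube_dyadicIndex (n : ℕ) (x : Fin m → ℝ) :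
    x ∈ dyadicCube m n (dyadicIndex n x) := by
  rw [mem_dyadicCube_iff]
  intro i
  have h1 := Int.ceil_lt_add_one ((2 : ℝ) ^ n * x i)
  have h2 := Int.le_ceil ((2 : ℝ) ^ n * x i)
  push_cast [dyadicIndex]
  constructor <;> linarith

theorem dyadicIndex_eq_of_mem {n : ℕ} {l : Fin m → ℤ} {x : Fin m → ℝ}
    (hx : x ∈ dyadicCube m n l) : dyadicIndex n x = l := by
  rw [mem_dyadicCube_iff] at hx
  funext i
  have : ⌈(2 : ℝ) ^ n * x i⌉ = l i + 1 := by
    rw [Int.ceil_eq_iff]; push_cast; constructor <;> linarith [hx i]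
  simp [dyadicIndex, this]

theorem dyadicCube_subset_ediv {k n : ℕ} (hkn : k ≤ n) (l : Fin m → ℤ) :
    dyadicCube m n l ⊆ dyadicCube m k fun i => l i / 2 ^ (n - k) := by
  intro x hx
  rw [mem_dyadicCube_iff] at hx ⊢
  intro i
  have hd : (0 : ℤ) < 2 ^ (n - k) := by positivity
  have hlo : ((l i / 2 ^ (n - k) * 2 ^ (n - k) : ℤ) : ℝ) ≤ l i :=
    Int.cast_le.mpr (Int.ediv_mul_le _ hd.ne')
  have hhi : ((l i + 1 : ℤ) : ℝ) ≤ ((l i / 2 ^ (n - k) + 1) * 2 ^ (n - k) : ℤ) :=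
    Int.cast_le.mpr (Int.lt_ediv_add_one_mul_self _ hd)
  have hpow : (2 : ℝ) ^ n = 2 ^ k * 2 ^ (n - k) := by rw [← pow_add, Nat.add_sub_cancel' hkn]
  have hd' : (0 : ℝ) < 2 ^ (n - k) := by positivity
  push_cast at hlo hhi
  rw [hpow] at hx
  obtain ⟨h1, h2⟩ := hx i
  constructor
  · nlinarith
  · nlinarith

theorem dyadicIndex_of_le {k n : ℕ} (hkn : k ≤ n) (x : Fin m → ℝ) :
    dyadicIndex k x = fun i => dyadicIndex n x i / 2 ^ (n - k) :=
  dyadicIndex_eq_of_mem (dyadicCube_subset_ediv hkn _ (mem_dyadicCube_dyadicIndex n x))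

theorem dyadicIndex_eq_of_le_of_mem {k n : ℕ} (hkn : k ≤ n) {x z : Fin m → ℝ}
    (hz : z ∈ dyadicCube m n (dyadicIndex n x)) : dyadicIndex k z = dyadicIndex k x := by
  rw [dyadicIndex_of_le hkn, dyadicIndex_of_le hkn x, dyadicIndex_eq_of_mem hz]

theorem dyadicIndex_succ (k : ℕ) (x : Fin m → ℝ) :
    dyadicIndex (k + 1) x = 2 • dyadicIndex k x + fun i => dyadicIndex (k + 1) x i % 2 := by
  funext i
  simp [dyadicIndex_of_le (Nat.le_succ k) x, Int.mul_ediv_add_emod]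

def unitIndices (m n : ℕ) : Finset (Fin m → ℤ) := Fintype.piFinset fun _ => Finset.Ico 0 (2 ^ n)

theorem card_unitIndices (m n : ℕ) : (unitIndices m n).card = 2 ^ (n * m) := by
  simp [unitIndices, Fintype.card_piFinset, Int.card_Ico, pow_mul, Int.toNat_pow_of_nonneg]

theorem dyadicCube_subset_unitCube {n : ℕ} {l : Fin m → ℤ} (hl : l ∈ unitIndices m n) :
    dyadicCube m n l ⊆ unitCube m := by
  intro x hx i
  rw [mem_dyadicCube_iff] at hx
  simp only [unitIndices, Fintype.mem_piFinset, Finset.mem_Ico] at hl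
  have h0 : (0 : ℝ) ≤ l i := by exact_mod_cast (hl i).1
  have h1 : (l i : ℝ) + 1 ≤ 2 ^ n := by exact_mod_cast (hl i).2
  have h2 : (0 : ℝ) < 2 ^ n := by positivity
  obtain ⟨g0, g1⟩ := hx i
  constructor <;> nlinarith

theorem dyadicIndex_mem_unitIndices {n : ℕ} {x : Fin m → ℝ} (hx : x ∈ unitCube m) :
    dyadicIndex n x ∈ unitIndices m n := by
  simp only [unitIndices, Fintype.mem_piFinset, Finset.mem_Ico]
  intro i
  obtain ⟨h0, h1⟩ := hx i
  have h2 : (0 : ℝ) < 2 ^ n := by positivity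
  have c1 : 0 < ⌈(2 : ℝ) ^ n * x i⌉ := Int.lt_ceil.mpr (by push_cast; positivity)
  have c2 : ⌈(2 : ℝ) ^ n * x i⌉ ≤ 2 ^ n := Int.ceil_le.mpr (by push_cast; nlinarith)
  simp only [dyadicIndex]
  omega

theorem biUnion_unitIndices (m n : ℕ) :
    ⋃ l ∈ unitIndices m n, dyadicCube m n l = unitCube m :=
  (Set.iUnion₂_subset fun _ hl => dyadicCube_subset_unitCube hl).antisymm fun x hx =>
    Set.mem_biUnion (dyadicIndex_mem_unitIndices hx) (mem_dyadicCube_dyadicIndex n x)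

theorem pairwiseDisjoint_dyadicCube (n : ℕ) (s : Set (Fin m → ℤ)) :
    s.PairwiseDisjoint (dyadicCube m n) := fun _ _ _ _ hne =>
  Set.disjoint_left.mpr fun _ hx hx' =>
    hne ((dyadicIndex_eq_of_mem hx).symm.trans (dyadicIndex_eq_of_mem hx'))

section PartitionSum

variable (ν : Measure (Fin m → ℝ))

def partitionSum (n : ℕ) (s : ℝ) : ℝ :=
  ∑ l ∈ unitIndices m n, (ν (dyadicCube m n l)).toReal ^ s

theorem measurableSet_unitCube (m : ℕ) : MeasurableSet (unitCube m) := by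
  rw [← biUnion_unitIndices m 0]
  exact Finset.measurableSet_biUnion _ fun l _ => measurableSet_dyadicCube 0 l

theorem partitionSum_nonneg (n : ℕ) (s : ℝ) : 0 ≤ partitionSum ν n s :=
  Finset.sum_nonneg fun _ _ => Real.rpow_nonneg ENNReal.toReal_nonneg _

variable [IsProbabilityMeasure ν]

theorem measure_dyadicCube_eq_zero (hν : ν (unitCube m) = 1) {n : ℕ} {l : Fin m → ℤ}
    (hl : l ∉ unitIndices m n) : ν (dyadicCube m n l) = 0 := by
  refine measure_mono_null (t := (unitCube m)ᶜ) (fun x hx hxU => hl ?_)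
    ((prob_compl_eq_zero_iff (measurableSet_unitCube m)).mpr hν)
  rw [← dyadicIndex_eq_of_mem hx]
  exact dyadicIndex_mem_unitIndices hxU

theorem betaN_eq_log_partitionSum {s : ℝ} (hs : s ≠ 0) (hν : ν (unitCube m) = 1) (n : ℕ) :
    betaN m ν n s = Real.log (partitionSum ν n s) / (n * Real.log 2) := by
  have hsupp : Function.support (fun l => (ν (dyadicCube m n l)).toReal ^ s) ⊆
      {l | 0 < ν (dyadicCube m n l)} := fun l hl =>
    pos_iff_ne_zero.mpr fun h0 : ν (dyadicCube m n l) = 0 => hl (by simp [h0, Real.zero_rpow hs])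
  have hsum : ∑' l, (ν (dyadicCube m n l)).toReal ^ s = partitionSum ν n s :=
    tsum_eq_sum fun l hl => by simp [measure_dyadicCube_eq_zero ν hν hl, Real.zero_rpow hs]
  rw [betaN, Real.log_pow, ← hsum, ← tsum_subtype_eq_of_support_subset hsupp]
  rfl

theorem partitionSum_one (hν : ν (unitCube m) = 1) (n : ℕ) : partitionSum ν n 1 = 1 := by
  simp only [partitionSum, Real.rpow_one]
  rw [← ENNReal.toReal_sum fun l _ => measure_ne_top ν _,
    ← measure_biUnion_finset (pairwiseDisjoint_dyadicCube n _) fun l _ =>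
      measurableSet_dyadicCube n l,
    biUnion_unitIndices, hν, ENNReal.toReal_one]

theorem lqSpectrum_one (hν : ν (unitCube m) = 1) : lqSpectrum m ν 1 = 0 := by
  simp [lqSpectrum, betaN_eq_log_partitionSum ν one_ne_zero hν, partitionSum_one ν hν]

theorem partitionSum_le {s : ℝ} (hs : 0 ≤ s) (n : ℕ) : partitionSum ν n s ≤ 2 ^ (n * m) := by
  calc partitionSum ν n s ≤ ∑ _l ∈ unitIndices m n, (1 : ℝ) :=
        Finset.sum_le_sum fun _ _ => Real.rpow_le_one ENNReal.toReal_nonneg measureReal_le_one hs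
    _ = 2 ^ (n * m) := by simp [card_unitIndices]

theorem betaN_le {s : ℝ} (hs : 0 < s) (hν : ν (unitCube m) = 1) (n : ℕ) :
    betaN m ν n s ≤ m := by
  rw [betaN_eq_log_partitionSum ν hs.ne' hν]
  have hZ := partitionSum_le ν hs.le n
  have hlog : Real.log (partitionSum ν n s) ≤ n * m * Real.log 2 := by
    rcases (partitionSum_nonneg ν n s).eq_or_lt with h0 | h0
    · rw [← h0, Real.log_zero]; positivity
    calc Real.log (partitionSum ν n s) ≤ Real.log (2 ^ (n * m)) := Real.log_le_log h0 hZ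
      _ = n * m * Real.log 2 := by rw [Real.log_pow]; push_cast; ring
  rcases n.eq_zero_or_pos with rfl | hn
  · simp
  · rw [div_le_iff₀ (by positivity)]
    linarith

theorem exists_partitionSum_le {s c : ℝ} (hs : 0 < s) (hc : 0 ≤ c) (hν : ν (unitCube m) = 1)
    (hβ : lqSpectrum m ν s < c) : ∃ C, 0 ≤ C ∧ ∀ n : ℕ, partitionSum ν n s ≤ C * 2 ^ (c * n) := by
  have hbdd : IsBoundedUnder (· ≤ ·) atTop fun n => betaN m ν n s :=
    isBoundedUnder_of_eventually_le (Eventually.of_forall (betaN_le ν hs hν))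
  obtain ⟨N, hN⟩ := ((eventually_lt_of_limsup_lt hβ hbdd).and
    (eventually_ge_atTop 1)).exists_forall_of_atTop
  refine ⟨2 ^ (N * m), by positivity, fun n => ?_⟩
  have h1 : (1 : ℝ) ≤ 2 ^ (N * m) := one_le_pow₀ one_le_two
  have h2 : (1 : ℝ) ≤ 2 ^ (c * n) := Real.one_le_rpow one_le_two (by positivity)
  rcases lt_or_ge n N with hn | hn
  · calc partitionSum ν n s ≤ 2 ^ (n * m) := partitionSum_le ν hs.le n
      _ ≤ 2 ^ (N * m) := pow_le_pow_right₀ one_le_two (Nat.mul_le_mul_right m hn.le)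
      _ ≤ 2 ^ (N * m) * 2 ^ (c * n) := le_mul_of_one_le_right (by positivity) h2
  obtain ⟨hlt, hn1⟩ := hN n hn
  have hpos : (0 : ℝ) < n * Real.log 2 := by
    have : (1 : ℝ) ≤ n := by exact_mod_cast hn1
    positivity
  rw [betaN_eq_log_partitionSum ν hs.ne' hν, div_lt_iff₀ hpos] at hlt
  refine le_trans ?_ (le_mul_of_one_le_left (by positivity) h1)
  rcases (partitionSum_nonneg ν n s).eq_or_lt with h0 | h0
  · rw [← h0]; positivity
  rw [Real.rpow_def_of_pos two_pos]
  exact ((Real.log_lt_iff_lt_exp h0).mp (by linarith)).le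

end PartitionSum

section HeavyCubes

variable (ν : Measure (Fin m → ℝ)) (a t : ℝ)

theorem Jfun_dyadicCube (n : ℕ) (l : Fin m → ℤ) :
    Jfun m ν a (dyadicCube m n l) = (ν (dyadicCube m n l)).toReal / 2 ^ (a * m * n) := by
  have hvol : (((2 : ℝ) ^ n)⁻¹ ^ m) ^ a = ((2 : ℝ) ^ (a * m * n))⁻¹ := by
    rw [← Real.rpow_natCast 2 n, ← Real.rpow_neg zero_le_two, ← Real.rpow_natCast _ m,
      ← Real.rpow_mul zero_le_two, ← Real.rpow_mul zero_le_two, ← Real.rpow_neg zero_le_two]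
    ring_nf
  rw [Jfun, volume_dyadicCube, hvol, div_eq_inv_mul]

def heavyIndices (n : ℕ) : Finset (Fin m → ℤ) :=
  (unitIndices m n).filter fun l => 1 / t ≤ Jfun m ν a (dyadicCube m n l)

variable {ν a t}

theorem two_rpow_le_mul_of_le_Jfun (ht : 0 < t) {n : ℕ} {l : Fin m → ℤ}
    (h : 1 / t ≤ Jfun m ν a (dyadicCube m n l)) :
    (2 : ℝ) ^ (a * m * n) ≤ t * (ν (dyadicCube m n l)).toReal := by
  rwa [Jfun_dyadicCube, div_le_div_iff₀ ht (by positivity), one_mul, mul_comm _ t] at h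

theorem two_rpow_le_of_le_Jfun [IsProbabilityMeasure ν] (ht : 0 < t) {n : ℕ}
    {l : Fin m → ℤ} (h : 1 / t ≤ Jfun m ν a (dyadicCube m n l)) : (2 : ℝ) ^ (a * m * n) ≤ t :=
  (two_rpow_le_mul_of_le_Jfun ht h).trans (mul_le_of_le_one_right ht.le measureReal_le_one)

theorem card_heavyIndices_mul_le (ht : 0 < t) {s : ℝ} (hs : 0 ≤ s) (n : ℕ) :
    (heavyIndices ν a t n).card * ((2 : ℝ) ^ (a * m * n) / t) ^ s ≤ partitionSum ν n s := by
  calc (heavyIndices ν a t n).card * ((2 : ℝ) ^ (a * m * n) / t) ^ s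
      ≤ ∑ l ∈ heavyIndices ν a t n, (ν (dyadicCube m n l)).toReal ^ s := by
        rw [← nsmul_eq_mul]
        refine Finset.card_nsmul_le_sum _ _ _ fun l hl => ?_
        refine Real.rpow_le_rpow (by positivity) ?_ hs
        rw [div_le_iff₀' ht]
        exact two_rpow_le_mul_of_le_Jfun ht (Finset.mem_filter.mp hl).2
    _ ≤ partitionSum ν n s :=
        Finset.sum_le_sum_of_subset_of_nonneg (Finset.filter_subset _ _) fun _ _ _ =>
          Real.rpow_nonneg ENNReal.toReal_nonneg _

theorem card_heavyIndices_le [IsProbabilityMeasure ν] (ht : 0 < t) {s ε C : ℝ} (hs : 0 ≤ s)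
    (hε : 0 ≤ ε) (hC0 : 0 ≤ C) {n : ℕ} (hC : partitionSum ν n s ≤ C * 2 ^ (a * m * (s + ε) * n)) :
    (heavyIndices ν a t n).card ≤ C * t ^ (s + ε) := by
  set r : ℝ := (2 : ℝ) ^ (a * m * n) with hr
  have hr0 : 0 < r := by positivity
  have hpow : (2 : ℝ) ^ (a * m * (s + ε) * n) = r ^ s * r ^ ε := by
    rw [← Real.rpow_add hr0, hr, ← Real.rpow_mul zero_le_two]; ring_nf
  rcases (heavyIndices ν a t n).eq_empty_or_nonempty with h0 | ⟨l, hl⟩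
  · simp only [h0, Finset.card_empty, Nat.cast_zero]
    positivity
  have hrt : r ^ ε ≤ t ^ ε :=
    Real.rpow_le_rpow hr0.le (two_rpow_le_of_le_Jfun ht (Finset.mem_filter.mp hl).2) hε
  have hmarkov := (card_heavyIndices_mul_le (a := a) ht hs n).trans hC
  rw [hpow, Real.div_rpow hr0.le ht.le, mul_div_assoc', div_le_iff₀ (by positivity)] at hmarkov
  calc ((heavyIndices ν a t n).card : ℝ) ≤ C * t ^ s * r ^ ε :=
        le_of_mul_le_mul_right (by linarith) (Real.rpow_pos_of_pos hr0 s)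
    _ ≤ C * t ^ s * t ^ ε := by gcongr
    _ = C * t ^ (s + ε) := by rw [Real.rpow_add ht, mul_assoc]

end HeavyCubes

section StoppingCubes

variable (ν : Measure (Fin m → ℝ)) (a t : ℝ)

def stoppingGen (x : Fin m → ℝ) : ℕ :=
  sInf {n | Jfun m ν a (dyadicCube m n (dyadicIndex n x)) < 1 / t}

def stoppingCube (x : Fin m → ℝ) : Set (Fin m → ℝ) :=
  dyadicCube m (stoppingGen ν a t x) (dyadicIndex (stoppingGen ν a t x) x)

open Classical in
/-- Every stopping cube is the whole unit cube or a child of a heavy cube of generation `< N`. -/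
def candidateCubes (N : ℕ) : Finset (Set (Fin m → ℝ)) :=
  (unitIndices m 0).image (dyadicCube m 0) ∪
    (Finset.range N).biUnion fun k =>
      (heavyIndices ν a t k ×ˢ Fintype.piFinset fun _ => ({0, 1} : Finset ℤ)).image
        fun p => dyadicCube m (k + 1) (2 • p.1 + p.2)

variable {ν a t}

theorem mem_stoppingCube (x : Fin m → ℝ) : x ∈ stoppingCube ν a t x :=
  mem_dyadicCube_dyadicIndex _ x

theorem le_Jfun_of_lt_stoppingGen {x : Fin m → ℝ} {k : ℕ} (hk : k < stoppingGen ν a t x) :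
    1 / t ≤ Jfun m ν a (dyadicCube m k (dyadicIndex k x)) :=
  not_lt.mp (Nat.notMem_of_lt_sInf hk)

theorem stoppingCube_subset_unitCube {x : Fin m → ℝ} (hx : x ∈ unitCube m) :
    stoppingCube ν a t x ⊆ unitCube m :=
  dyadicCube_subset_unitCube (dyadicIndex_mem_unitIndices hx)

theorem stoppingCube_mem_candidateCubes {N : ℕ}
    (hN : ∀ k, (heavyIndices ν a t k).Nonempty → k < N) {x : Fin m → ℝ} (hx : x ∈ unitCube m) :
    stoppingCube ν a t x ∈ candidateCubes ν a t N := by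
  rw [stoppingCube, candidateCubes, Finset.mem_union]
  rcases h : stoppingGen ν a t x with _ | k
  · exact Or.inl (Finset.mem_image_of_mem _ (dyadicIndex_mem_unitIndices hx))
  have hheavy : dyadicIndex k x ∈ heavyIndices ν a t k :=
    Finset.mem_filter.mpr ⟨dyadicIndex_mem_unitIndices hx,
      le_Jfun_of_lt_stoppingGen (h ▸ Nat.lt_succ_self k)⟩
  refine Or.inr (Finset.mem_biUnion.mpr ⟨k, Finset.mem_range.mpr (hN k ⟨_, hheavy⟩), ?_⟩)
  refine Finset.mem_image.mpr ⟨(dyadicIndex k x, fun i => dyadicIndex (k + 1) x i % 2),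
    Finset.mem_product.mpr ⟨hheavy, Fintype.mem_piFinset.mpr fun i => ?_⟩, ?_⟩
  · rcases Int.emod_two_eq (dyadicIndex (k + 1) x i) with h2 | h2 <;> simp [h2]
  · rw [← dyadicIndex_succ]

theorem card_candidateCubes_le (N : ℕ) :
    (candidateCubes ν a t N).card ≤
      1 + 2 ^ m * ∑ k ∈ Finset.range N, (heavyIndices ν a t k).card := by
  have hchildren : (Fintype.piFinset fun _ : Fin m => ({0, 1} : Finset ℤ)).card = 2 ^ m := by
    simp [Fintype.card_piFinset]
  calc (candidateCubes ν a t N).card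
      ≤ (unitIndices m 0).card + ∑ k ∈ Finset.range N,
          (heavyIndices ν a t k ×ˢ Fintype.piFinset fun _ => ({0, 1} : Finset ℤ)).card :=
        (Finset.card_union_le _ _).trans (add_le_add Finset.card_image_le
          (Finset.card_biUnion_le.trans (Finset.sum_le_sum fun _ _ => Finset.card_image_le)))
    _ = 1 + 2 ^ m * ∑ k ∈ Finset.range N, (heavyIndices ν a t k).card := by
        simp [card_unitIndices, Finset.card_product, hchildren, Finset.mul_sum, mul_comm]

variable [IsProbabilityMeasure ν]

theorem exists_Jfun_dyadicCube_lt (ham : 0 < a * m) (ht : 0 < t) (x : Fin m → ℝ) :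
    ∃ n, Jfun m ν a (dyadicCube m n (dyadicIndex n x)) < 1 / t := by
  have hgrow : Tendsto (fun n : ℕ => (2 : ℝ) ^ (a * m * n)) atTop atTop := by
    rw [funext fun n : ℕ => Real.rpow_mul_natCast zero_le_two (a * m) n]
    exact tendsto_pow_atTop_atTop_of_one_lt (Real.one_lt_rpow one_lt_two ham)
  obtain ⟨n, hn⟩ := (hgrow.eventually_gt_atTop t).exists
  exact ⟨n, not_le.mp fun h => (two_rpow_le_of_le_Jfun ht h).not_gt hn⟩

theorem Jfun_stoppingCube_lt (ham : 0 < a * m) (ht : 0 < t) (x : Fin m → ℝ) :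
    Jfun m ν a (stoppingCube ν a t x) < 1 / t :=
  Nat.sInf_mem (exists_Jfun_dyadicCube_lt ham ht x)

theorem stoppingCube_eq_of_mem (ham : 0 < a * m) (ht : 0 < t) {x z : Fin m → ℝ}
    (hz : z ∈ stoppingCube ν a t x) : stoppingCube ν a t z = stoppingCube ν a t x := by
  have hgen : stoppingGen ν a t z = stoppingGen ν a t x :=
    Nat.sInf_eq_of_forall_le_iff (exists_Jfun_dyadicCube_lt ham ht x) fun k hk => by
      rw [dyadicIndex_eq_of_le_of_mem hk hz]
  rw [stoppingCube, hgen, dyadicIndex_eq_of_mem hz]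
  rfl

theorem isCubePartition_stoppingCubes (ham : 0 < a * m) (ht : 0 < t)
    (hfin : (stoppingCube ν a t '' unitCube m).Finite) : IsCubePartition m hfin.toFinset := by
  simp only [IsCubePartition, Set.Finite.coe_toFinset, Set.Finite.mem_toFinset]
  refine ⟨?_, ?_, ?_⟩
  · rintro _ ⟨x, hx, rfl⟩
    exact ⟨isHalfOpenCube_dyadicCube _ _, stoppingCube_subset_unitCube hx⟩
  · rintro _ ⟨x, -, rfl⟩ _ ⟨y, -, rfl⟩ hne
    refine Set.disjoint_left.mpr fun z hzx hzy => hne ?_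
    rw [← stoppingCube_eq_of_mem ham ht hzx, stoppingCube_eq_of_mem ham ht hzy]
  · refine (Set.sUnion_subset ?_).antisymm fun x hx => ⟨_, ⟨x, hx, rfl⟩, mem_stoppingCube x⟩
    rintro _ ⟨x, hx, rfl⟩
    exact stoppingCube_subset_unitCube hx

theorem partCount_le (ham : 0 < a * m) (ht : 0 < t) {N : ℕ}
    (hN : ∀ k, (heavyIndices ν a t k).Nonempty → k < N) :
    partCount m ν a t ≤ 1 + 2 ^ m * ∑ k ∈ Finset.range N, (heavyIndices ν a t k).card := by
  have hsub : stoppingCube ν a t '' unitCube m ⊆ candidateCubes ν a t N := by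
    rintro _ ⟨x, hx, rfl⟩
    exact stoppingCube_mem_candidateCubes hN hx
  have hfin := (candidateCubes ν a t N).finite_toSet.subset hsub
  have hsmall : ∀ Q ∈ hfin.toFinset, Jfun m ν a Q < 1 / t := by
    simp only [Set.Finite.mem_toFinset]
    rintro _ ⟨x, -, rfl⟩
    exact Jfun_stoppingCube_lt ham ht x
  calc partCount m ν a t ≤ hfin.toFinset.card :=
        Nat.sInf_le ⟨_, isCubePartition_stoppingCubes ham ht hfin, hsmall, rfl⟩
    _ ≤ (candidateCubes ν a t N).card := Finset.card_le_card (Set.Finite.toFinset_subset.mpr hsub)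
    _ ≤ _ := card_candidateCubes_le N

end StoppingCubes

section Growth

variable {ν : Measure (Fin m → ℝ)} [IsProbabilityMeasure ν] {a t : ℝ}

theorem lt_of_heavyIndices_nonempty (ham : 0 < a * m) (ht : 0 < t) {k : ℕ}
    (hk : (heavyIndices ν a t k).Nonempty) : k < ⌊Real.logb 2 t / (a * m)⌋₊ + 1 := by
  obtain ⟨l, hl⟩ := hk
  have h := two_rpow_le_of_le_Jfun ht (Finset.mem_filter.mp hl).2
  rw [← Real.le_logb_iff_rpow_le one_lt_two ht] at h
  exact Nat.lt_succ_of_le (Nat.le_floor ((le_div_iff₀' ham).mpr h))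

theorem natCast_floor_logb_add_one_le (ham : 0 < a * m) (ht : 1 ≤ t) {ε : ℝ} (hε : 0 < ε) :
    ((⌊Real.logb 2 t / (a * m)⌋₊ + 1 : ℕ) : ℝ) ≤
      (1 / (ε * (a * m * Real.log 2)) + 1) * t ^ ε := by
  have hlog2 : 0 < Real.log 2 := Real.log_pos one_lt_two
  have hlogb : 0 ≤ Real.logb 2 t / (a * m) :=
    div_nonneg (Real.logb_nonneg one_lt_two ht) ham.le
  have hlogt : Real.log t ≤ t ^ ε / ε := Real.log_le_rpow_div (by linarith) hε
  have htε : 1 ≤ t ^ ε := Real.one_le_rpow ht hε.le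
  push_cast
  calc (⌊Real.logb 2 t / (a * m)⌋₊ : ℝ) + 1 ≤ Real.logb 2 t / (a * m) + 1 := by
        gcongr; exact Nat.floor_le hlogb
    _ = Real.log t / (a * m * Real.log 2) + 1 := by rw [Real.logb, div_div, mul_comm]
    _ ≤ t ^ ε / ε / (a * m * Real.log 2) + t ^ ε := by gcongr
    _ = (1 / (ε * (a * m * Real.log 2)) + 1) * t ^ ε := by field_simp

theorem exists_partCount_le_rpow (ham : 0 < a * m) (hν : ν (unitCube m) = 1) {s ε : ℝ}
    (hs : 0 < s) (hε : 0 < ε) (hβ : lqSpectrum m ν s ≤ a * m * s) :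
    ∃ C, ∀ t, 1 ≤ t → (partCount m ν a t : ℝ) ≤ C * t ^ (s + 2 * ε) := by
  obtain ⟨C, hC0, hC⟩ := exists_partitionSum_le ν hs (c := a * m * (s + ε)) (by positivity) hν
    (by nlinarith)
  set K : ℝ := 1 / (ε * (a * m * Real.log 2)) + 1
  refine ⟨1 + 2 ^ m * K * C, fun t ht => ?_⟩
  have ht0 : 0 < t := by linarith
  have hcount := partCount_le (ν := ν) ham ht0 fun k => lt_of_heavyIndices_nonempty ham ht0
  have hheavy : ∀ k, ((heavyIndices ν a t k).card : ℝ) ≤ C * t ^ (s + ε) := fun k =>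
    card_heavyIndices_le ht0 hs.le hε.le hC0 (hC k)
  have hgen := natCast_floor_logb_add_one_le ham ht hε
  have hone : 1 ≤ t ^ (s + 2 * ε) := Real.one_le_rpow ht (by positivity)
  calc (partCount m ν a t : ℝ)
      ≤ 1 + 2 ^ m * ∑ k ∈ Finset.range (⌊Real.logb 2 t / (a * m)⌋₊ + 1),
          ((heavyIndices ν a t k).card : ℝ) := by exact_mod_cast hcount
    _ ≤ 1 + 2 ^ m * ((⌊Real.logb 2 t / (a * m)⌋₊ + 1 : ℕ) * (C * t ^ (s + ε))) := by
        gcongr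
        exact (Finset.sum_le_sum fun k _ => hheavy k).trans (by simp)
    _ ≤ 1 + 2 ^ m * (K * t ^ ε * (C * t ^ (s + ε))) := by gcongr
    _ = 1 + 2 ^ m * K * C * t ^ (s + 2 * ε) := by
        rw [show s + 2 * ε = ε + (s + ε) by ring, Real.rpow_add ht0 ε (s + ε)]; ring
    _ ≤ (1 + 2 ^ m * K * C) * t ^ (s + 2 * ε) := by nlinarith

end Growth

end

/-- **Lemma 2.6**: the upper `ν`-partition entropy satisfies `h_a ≤ s_{am}`. -/
theorem statement1 (m : ℕ) (hm : 0 < m) (ν : Measure (Fin m → ℝ))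
    [IsProbabilityMeasure ν] (hν : ν (unitCube m) = 1) (a : ℝ) (ha : 0 < a) :
    hPart m ν a ≤ ENNReal.ofReal (sb m ν (a * m)) := by
  have ham : 0 < a * m := mul_pos ha (Nat.cast_pos.mpr hm)
  have hne : {s : ℝ | 0 < s ∧ lqSpectrum m ν s - a * m * s ≤ 0}.Nonempty :=
    ⟨1, one_pos, by rw [lqSpectrum_one ν hν]; linarith⟩
  refine ENNReal.le_ofReal_of_forall_lt fun z hz => ?_
  obtain ⟨s, ⟨hs, hβ⟩, hsz⟩ := exists_lt_of_csInf_lt hne hz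
  set ε := (z - s) / 3
  have hε : 0 < ε := by simp only [ε]; linarith
  obtain ⟨C, hC⟩ := exists_partCount_le_rpow ham hν hs hε (by linarith)
  calc hPart m ν a ≤ ENNReal.ofReal (s + 2 * ε + ε) :=
        limsup_ofReal_log_div_log_le (by positivity) hε ((eventually_ge_atTop 1).mono hC)
    _ = ENNReal.ofReal z := by congr 1; simp only [ε]; ring
end
end

section
/- For every a > 0, the upper ν-partition entropy h_a equals 1/α_a, with the extended-real conventions 1/0 = ∞ and 1/∞ = 0 (Proposition 2.3). -/
/-!
`𝒩_a` is the counting function of the sequence `γ_{a,n}`: up to ties, `𝒩_a(t)` is the least `n`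
with `γ_{a,n} < 1/t`, and dyadic subdivisions of the cube show that it is finite. So both
exponents compare `log n` with `log (1/γ_{a,n})` along pairs `(n, t)` with `t ≈ 1/γ_{a,n}`.
Taking `n = 𝒩_a(t) - 1` gives `γ_{a,n} ≥ 1/t`, hence `h_a ≤ 1/α_a`; taking `t = 2/γ_{a,n}` gives
`𝒩_a(t) > n`, hence `h_a ≥ 1/α_a`. The losses, `log (n+1) / log n` and
`log (2/γ_{a,n}) / log (1/γ_{a,n})`, tend to `1`. If some `γ_{a,n₀}` vanishes, then `𝒩_a ≤ n₀`,
so `h_a = 0`, while `γ_{a,n} = 0` for all `n ≥ n₀`, so `α_a = ∞`.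
-/

open MeasureTheory Filter
open scoped ENNReal

noncomputable section

/-- `γ_{a,n} = inf_{Ξ ∈ Υ_n} max_{Q ∈ Ξ} 𝔍_a(Q)`, the infimum over partitions of the
unit cube into at most `n` half-open subcubes. -/
def gammaA (m : ℕ) (ν : Measure (Fin m → ℝ)) (a : ℝ) (n : ℕ) : ℝ :=
  sInf {r : ℝ | ∃ P : Finset (Set (Fin m → ℝ)), IsCubePartition m P ∧ P.card ≤ n ∧
    r = sSup (Jfun m ν a '' ↑P)}

/-- `α_a = liminf_n log (1/γ_{a,n}) / log n` in the extended reals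
(with `log (1/0) = ∞`). -/
def alphaA (m : ℕ) (ν : Measure (Fin m → ℝ)) (a : ℝ) : ℝ≥0∞ :=
  liminf (fun n : ℕ => if gammaA m ν a n = 0 then (⊤ : ℝ≥0∞)
    else ENNReal.ofReal (Real.log (1 / gammaA m ν a n) / Real.log n)) atTop

open Real Topology

namespace ENNReal

variable {α : Type*} {l : Filter α} [l.NeBot]

theorem limsup_mul_of_tendsto_one {u v : α → ℝ≥0∞} (hv : Tendsto v l (𝓝 1)) :
    limsup (u * v) l = limsup u l := by
  have hlim : limsup v l = 1 := hv.limsup_eq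
  refine le_antisymm ?_ ?_
  · calc limsup (u * v) l ≤ limsup u l * limsup v l :=
          limsup_mul_le' (Or.inr (by simp [hlim])) (Or.inr (by simp [hlim]))
      _ = limsup u l := by rw [hlim, mul_one]
  · calc limsup u l = limsup u l * liminf v l := by rw [hv.liminf_eq, mul_one]
      _ ≤ limsup (u * v) l := le_limsup_mul

end ENNReal

theorem Real.tendsto_log_nat_add_one_div_log :
    Tendsto (fun n : ℕ => log (n + 1) / log n) atTop (𝓝 1) := by
  have hlog := tendsto_log_atTop.comp tendsto_natCast_atTop_atTop
  have h := tendsto_const_nhds (x := (1 : ℝ)).add (tendsto_log_nat_add_one_sub_log.div_atTop hlog)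
  rw [add_zero] at h
  refine h.congr' ?_
  filter_upwards [hlog.eventually_gt_atTop 0] with n hn
  simp only [Function.comp_apply] at hn ⊢
  field_simp
  ring

/-- `N` is the counting function of the sequence `γ`: up to the boundary case `γ n = 1 / t`,
`N t` is the least `n ≥ 1` with `γ n < 1 / t`. -/
structure IsCountingFunction (γ : ℕ → ℝ) (N : ℝ → ℕ) : Prop where
  count_le : ∀ t > 0, ∀ n ≥ 1, γ n < 1 / t → N t ≤ n
  lt_count : ∀ t > 0, ∀ n, 1 / t < γ n → n < N t

namespace IsCountingFunction

variable {γ : ℕ → ℝ} {N : ℝ → ℕ}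

theorem tendsto_atTop (hN : IsCountingFunction γ N) (hpos : ∀ n ≥ 1, 0 < γ n) :
    Tendsto N atTop atTop := by
  refine Filter.tendsto_atTop.2 fun b => ?_
  have hγ := hpos (b + 1) (Nat.le_add_left 1 b)
  filter_upwards [eventually_gt_atTop (1 / γ (b + 1))] with t ht
  have ht0 : 0 < t := (one_div_pos.2 hγ).trans ht
  exact (hN.lt_count t ht0 (b + 1) ((one_div_lt ht0 hγ).2 ht)).le.trans' b.le_succ

theorem le_one_div_of_count_le (hN : IsCountingFunction γ N) {t : ℝ} (ht : 0 < t) {n : ℕ}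
    (hn : N t ≤ n) : γ n ≤ 1 / t :=
  not_lt.1 fun h => (hN.lt_count t ht n h).not_ge hn

theorem tendsto_one_div_atTop (hN : IsCountingFunction γ N) (hpos : ∀ n ≥ 1, 0 < γ n) :
    Tendsto (fun n => 1 / γ n) atTop atTop := by
  refine Filter.tendsto_atTop.2 fun b => ?_
  have ht : 0 < max b 1 := lt_max_of_lt_right one_pos
  filter_upwards [eventually_ge_atTop (max (N (max b 1)) 1)] with n hn
  have hγ := hpos n (le_of_max_le_right hn)
  exact (le_max_left b 1).trans
    ((le_one_div ht hγ).2 (hN.le_one_div_of_count_le ht (le_of_max_le_left hn)))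

theorem tendsto_log_one_div_atTop (hN : IsCountingFunction γ N) (hpos : ∀ n ≥ 1, 0 < γ n) :
    Tendsto (fun n => log (1 / γ n)) atTop atTop :=
  tendsto_log_atTop.comp (hN.tendsto_one_div_atTop hpos)

theorem one_div_le_pred (hN : IsCountingFunction γ N) {t : ℝ} (ht : 0 < t) (h : 2 ≤ N t) :
    1 / t ≤ γ (N t - 1) :=
  not_lt.1 fun hlt => by have := hN.count_le t ht (N t - 1) (by omega) hlt; omega

theorem limsup_log_div_log_le (hN : IsCountingFunction γ N) (hpos : ∀ n ≥ 1, 0 < γ n) :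
    limsup (fun t : ℝ => ENNReal.ofReal (log (N t) / log t)) atTop ≤
      limsup (fun n : ℕ => ENNReal.ofReal (log n / log (1 / γ n))) atTop := by
  set W := fun n : ℕ => ENNReal.ofReal (log n / log (1 / γ n))
  set ρ := fun n : ℕ => ENNReal.ofReal (log (n + 1) / log n)
  have hρ : Tendsto ρ atTop (𝓝 1) := by
    simpa using ENNReal.tendsto_ofReal tendsto_log_nat_add_one_div_log
  have hpred : Tendsto (fun t => N t - 1) atTop atTop :=
    (tendsto_sub_atTop_nat 1).comp (hN.tendsto_atTop hpos)
  have hbound : ∀ᶠ t in atTop,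
      ENNReal.ofReal (log (N t) / log t) ≤ ((W * ρ) ∘ fun t => N t - 1) t := by
    filter_upwards [hpred.eventually (eventually_ge_atTop 2),
      hpred.eventually ((hN.tendsto_log_one_div_atTop hpos).eventually_gt_atTop 0),
      eventually_gt_atTop 0] with t hn2 hL ht
    set n := N t - 1
    have hNt : N t = n + 1 := by omega
    have hγ : 1 / t ≤ γ n := hN.one_div_le_pred ht (by omega)
    have hlogn : 0 < log n := log_pos (by exact_mod_cast hn2)
    have hLt : log (1 / γ n) ≤ log t :=
      log_le_log (one_div_pos.2 (hpos n (by omega))) ((one_div_le ht (hpos n (by omega))).1 hγ)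
    have hreal : log (N t) / log t ≤ log n / log (1 / γ n) * (log (n + 1) / log n) := by
      rw [div_mul_div_comm, mul_comm (log n), mul_div_mul_right _ _ hlogn.ne', hNt]
      push_cast
      exact div_le_div_of_nonneg_left (log_nonneg (by linarith)) hL hLt
    simp only [Function.comp_apply, Pi.mul_apply, W, ρ]
    rw [← ENNReal.ofReal_mul (div_nonneg hlogn.le hL.le)]
    exact ENNReal.ofReal_le_ofReal hreal
  calc _ ≤ limsup ((W * ρ) ∘ fun t => N t - 1) atTop := limsup_le_limsup hbound
    _ ≤ limsup (W * ρ) atTop := hpred.limsup_comp_le_limsup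
    _ = limsup W atTop := ENNReal.limsup_mul_of_tendsto_one hρ

theorem le_limsup_log_div_log (hN : IsCountingFunction γ N) (hpos : ∀ n ≥ 1, 0 < γ n) :
    limsup (fun n : ℕ => ENNReal.ofReal (log n / log (1 / γ n))) atTop ≤
      limsup (fun t : ℝ => ENNReal.ofReal (log (N t) / log t)) atTop := by
  set f := fun t : ℝ => ENNReal.ofReal (log (N t) / log t)
  set T := fun n : ℕ => 2 * (1 / γ n)
  set σ := fun n : ℕ => ENNReal.ofReal (1 + log 2 / log (1 / γ n))
  have hL := hN.tendsto_log_one_div_atTop hpos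
  have hσ : Tendsto σ atTop (𝓝 1) := by
    have := ENNReal.tendsto_ofReal
      ((tendsto_const_nhds (x := (1 : ℝ))).add ((tendsto_const_nhds (x := log 2)).div_atTop hL))
    rwa [add_zero, ENNReal.ofReal_one] at this
  have hT : Tendsto T atTop atTop := (hN.tendsto_one_div_atTop hpos).const_mul_atTop two_pos
  have hbound : ∀ᶠ n : ℕ in atTop,
      ENNReal.ofReal (log n / log (1 / γ n)) ≤ ((f ∘ T) * σ) n := by
    filter_upwards [eventually_ge_atTop 1, hL.eventually_gt_atTop 0] with n hn hLn
    have hγ := hpos n hn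
    have hTn : 0 < T n := by positivity
    have hlogT : log (T n) = log 2 + log (1 / γ n) := log_mul two_ne_zero (one_div_pos.2 hγ).ne'
    have hlogTpos : 0 < log (T n) := by rw [hlogT]; linarith [log_pos one_lt_two]
    have hcount : n < N (T n) := by
      refine hN.lt_count (T n) hTn n ?_
      have h1T : 1 / T n = γ n / 2 := by simp only [T]; field_simp
      rw [h1T]; linarith
    have hreal : log n / log (1 / γ n) ≤
        log (N (T n)) / log (T n) * (1 + log 2 / log (1 / γ n)) := by
      rw [one_add_div hLn.ne', add_comm (log _), ← hlogT, div_mul_div_cancel₀ hlogTpos.ne']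
      exact div_le_div_of_nonneg_right
        (log_le_log (by exact_mod_cast hn) (by exact_mod_cast hcount.le)) hLn.le
    simp only [Function.comp_apply, Pi.mul_apply, f, σ]
    rw [← ENNReal.ofReal_mul (div_nonneg (log_natCast_nonneg _) hlogTpos.le)]
    exact ENNReal.ofReal_le_ofReal hreal
  calc _ ≤ limsup ((f ∘ T) * σ) atTop := limsup_le_limsup hbound
    _ = limsup (f ∘ T) atTop := ENNReal.limsup_mul_of_tendsto_one hσ
    _ ≤ limsup f atTop := hT.limsup_comp_le_limsup

theorem eq_zero_of_le (hN : IsCountingFunction γ N) (hγ : ∀ n, 0 ≤ γ n) {n₀ : ℕ} (hn₀ : 1 ≤ n₀)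
    (h₀ : γ n₀ = 0) {n : ℕ} (hn : n₀ ≤ n) : γ n = 0 := by
  refine (hγ n).antisymm' (not_lt.1 fun hpos => ?_)
  have hcount := hN.lt_count (2 / γ n) (by positivity) n (by field_simp; linarith)
  have := hN.count_le (2 / γ n) (by positivity) n₀ hn₀ (by rw [h₀]; positivity)
  omega

theorem limsup_log_div_log_eq_zero (hN : IsCountingFunction γ N) {n₀ : ℕ} (hn₀ : 1 ≤ n₀)
    (h₀ : γ n₀ = 0) :
    limsup (fun t : ℝ => ENNReal.ofReal (log (N t) / log t)) atTop = 0 := by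
  have hlim : Tendsto (fun t : ℝ => ENNReal.ofReal (n₀ / log t)) atTop (𝓝 0) := by
    simpa using ENNReal.tendsto_ofReal (tendsto_const_nhds.div_atTop tendsto_log_atTop)
  refine le_antisymm ?_ bot_le
  calc _ ≤ limsup (fun t : ℝ => ENNReal.ofReal (n₀ / log t)) atTop := by
        refine limsup_le_limsup ?_
        filter_upwards [eventually_gt_atTop 1] with t ht
        have hN₀ : N t ≤ n₀ := hN.count_le t (by linarith) n₀ hn₀ (by rw [h₀]; positivity)
        refine ENNReal.ofReal_le_ofReal (div_le_div_of_nonneg_right ?_ (log_pos ht).le)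
        exact (log_le_self (Nat.cast_nonneg _)).trans (by exact_mod_cast hN₀)
    _ = 0 := hlim.limsup_eq

theorem limsup_log_div_log_eq_inv_liminf (hN : IsCountingFunction γ N) (hγ : ∀ n, 0 ≤ γ n) :
    limsup (fun t : ℝ => ENNReal.ofReal (log (N t) / log t)) atTop =
      (liminf (fun n : ℕ => if γ n = 0 then ⊤
        else ENNReal.ofReal (log (1 / γ n) / log n)) atTop)⁻¹ := by
  by_cases! hpos : ∀ n ≥ 1, 0 < γ n
  · have hinv : ∀ᶠ n : ℕ in atTop,
        (if γ n = 0 then ⊤ else ENNReal.ofReal (log (1 / γ n) / log n))⁻¹ =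
          ENNReal.ofReal (log n / log (1 / γ n)) := by
      filter_upwards [eventually_ge_atTop 2,
        (hN.tendsto_log_one_div_atTop hpos).eventually_gt_atTop 0] with n hn hL
      have hlogn : 0 < log n := log_pos (by exact_mod_cast hn)
      rw [if_neg (hpos n (by omega)).ne', ← ENNReal.ofReal_inv_of_pos (div_pos hL hlogn), inv_div]
    rw [ENNReal.inv_liminf, limsup_congr hinv]
    exact (hN.limsup_log_div_log_le hpos).antisymm (hN.le_limsup_log_div_log hpos)
  · obtain ⟨n₀, hn₀, hle⟩ := hpos
    have h₀ : γ n₀ = 0 := hle.antisymm (hγ n₀)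
    have htop : ∀ᶠ n : ℕ in atTop, (if γ n = 0 then ⊤
        else ENNReal.ofReal (log (1 / γ n) / log n)) = ⊤ := by
      filter_upwards [eventually_ge_atTop n₀] with n hn
      rw [if_pos (hN.eq_zero_of_le hγ hn₀ h₀ hn)]
    rw [hN.limsup_log_div_log_eq_zero hn₀ h₀, liminf_congr htop, liminf_const, ENNReal.inv_top]

end IsCountingFunction

section CubePartitions

open BoxIntegral

variable {m : ℕ} {ν : Measure (Fin m → ℝ)} {a : ℝ}

theorem isCubePartition_singleton (m : ℕ) : IsCubePartition m {unitCube m} := by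
  refine ⟨?_, by simp, by simp⟩
  rintro Q hQ
  rw [Finset.mem_singleton.1 hQ]
  exact ⟨⟨0, 1, one_pos, by simp [unitCube]⟩, subset_rfl⟩

theorem IsCubePartition.nonempty {P : Finset (Set (Fin m → ℝ))} (hP : IsCubePartition m P) :
    P.Nonempty := by
  obtain ⟨Q, hQ, -⟩ : (fun _ => 1 : Fin m → ℝ) ∈ ⋃₀ (P : Set (Set (Fin m → ℝ))) := by
    rw [hP.2.2]; exact fun _ => ⟨one_pos, le_rfl⟩
  exact ⟨Q, hQ⟩

theorem sSup_Jfun_lt_iff {P : Finset (Set (Fin m → ℝ))} (hP : IsCubePartition m P) {c : ℝ} :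
    sSup (Jfun m ν a '' ↑P) < c ↔ ∀ Q ∈ P, Jfun m ν a Q < c := by
  rw [(P.finite_toSet.image _).csSup_lt_iff ((Finset.coe_nonempty.2 hP.nonempty).image _)]
  simp

theorem Jfun_nonneg (Q : Set (Fin m → ℝ)) : 0 ≤ Jfun m ν a Q := by
  unfold Jfun; positivity

theorem sSup_Jfun_nonneg (P : Finset (Set (Fin m → ℝ))) : 0 ≤ sSup (Jfun m ν a '' ↑P) :=
  Real.sSup_nonneg (by rintro _ ⟨Q, -, rfl⟩; exact Jfun_nonneg Q)

theorem gammaA_nonneg (n : ℕ) : 0 ≤ gammaA m ν a n :=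
  Real.sInf_nonneg (by rintro _ ⟨P, -, -, rfl⟩; exact sSup_Jfun_nonneg P)

theorem gammaA_le {P : Finset (Set (Fin m → ℝ))} (hP : IsCubePartition m P) {n : ℕ}
    (hn : P.card ≤ n) : gammaA m ν a n ≤ sSup (Jfun m ν a '' ↑P) :=
  csInf_le ⟨0, by rintro _ ⟨P', -, -, rfl⟩; exact sSup_Jfun_nonneg P'⟩ ⟨P, hP, hn, rfl⟩

def unitBox (m : ℕ) : Box (Fin m) := ⟨0, 1, fun _ => zero_lt_one⟩

theorem coe_unitBox (m : ℕ) : (unitBox m : Set (Fin m → ℝ)) = unitCube m := by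
  ext x
  simp [Box.mem_coe, Box.mem_def, unitBox, unitCube]

theorem isHalfOpenCube_coe_box {J : Box (Fin m)} {h : ℝ} (h₀ : 0 < h)
    (hJ : ∀ i, J.upper i - J.lower i = h) : IsHalfOpenCube (J : Set (Fin m → ℝ)) :=
  ⟨J.lower, h, h₀, by ext x; simp [Box.mem_coe, Box.mem_def, fun i => sub_eq_iff_eq_add'.1 (hJ i)]⟩

theorem exists_isCubePartition_forall_volume_le (m : ℕ) {r : ℝ} (hr : 0 < r) :
    ∃ P : Finset (Set (Fin m → ℝ)), IsCubePartition m P ∧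
      ∀ Q ∈ P, volume Q ≤ ENNReal.ofReal ((2 * r) ^ m) := by
  classical
  obtain ⟨p, hp, -, hsub, hhom, -⟩ :=
    (unitBox m).exists_taggedPartition_isHenstock_isSubordinate_homothetic fun _ => ⟨r, hr⟩
  refine ⟨p.boxes.image (↑), ⟨?_, ?_, ?_⟩, ?_⟩
  · simp only [Finset.mem_image]
    rintro _ ⟨J, hJ, rfl⟩
    obtain ⟨k, hk⟩ := hhom J hJ
    refine ⟨isHalfOpenCube_coe_box (h := 1 / 2 ^ k) (by positivity) fun i => ?_, ?_⟩
    · simpa [unitBox] using hk i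
    · rw [← coe_unitBox]; exact Box.coe_subset_coe.2 (p.le_of_mem hJ)
  · rintro _ hQ₁ _ hQ₂ hne
    simp only [Finset.coe_image, Set.mem_image] at hQ₁ hQ₂
    obtain ⟨J₁, hJ₁, rfl⟩ := hQ₁
    obtain ⟨J₂, hJ₂, rfl⟩ := hQ₂
    exact p.disjoint_coe_of_mem hJ₁ hJ₂ (fun h => hne (h ▸ rfl))
  · rw [← coe_unitBox, ← hp.iUnion_eq, Finset.coe_image, Set.sUnion_image]
    rfl
  · simp only [Finset.mem_image]
    rintro _ ⟨J, hJ, rfl⟩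
    calc volume (J : Set (Fin m → ℝ)) ≤ volume (Metric.closedBall (p.tag J) r) :=
          measure_mono (Box.coe_subset_Icc.trans (hsub J hJ))
      _ = ENNReal.ofReal ((2 * r) ^ m) := by simp [Real.volume_pi_closedBall _ hr.le]

theorem Jfun_le_volume_rpow [IsZeroOrProbabilityMeasure ν] (Q : Set (Fin m → ℝ)) :
    Jfun m ν a Q ≤ (volume Q).toReal ^ a :=
  mul_le_of_le_one_right (by positivity) measureReal_le_one

theorem exists_isCubePartition_forall_Jfun_lt [IsZeroOrProbabilityMeasure ν] (hm : 0 < m)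
    (ha : 0 < a) {ε : ℝ} (hε : 0 < ε) :
    ∃ P : Finset (Set (Fin m → ℝ)), IsCubePartition m P ∧ ∀ Q ∈ P, Jfun m ν a Q < ε := by
  have hcont : Tendsto (fun r : ℝ => ((2 * r) ^ m) ^ a) (𝓝[>] 0) (𝓝 0) := by
    have := ((Real.continuous_rpow_const ha.le).comp
      (by fun_prop : Continuous fun r : ℝ => (2 * r) ^ m)).tendsto 0
    simpa [Function.comp_def, hm.ne', ha.ne'] using this.mono_left nhdsWithin_le_nhds
  obtain ⟨r, hrε, hr⟩ := ((hcont.eventually (gt_mem_nhds hε)).and self_mem_nhdsWithin).exists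
  obtain ⟨P, hP, hvol⟩ := exists_isCubePartition_forall_volume_le m hr
  refine ⟨P, hP, fun Q hQ => lt_of_le_of_lt ?_ hrε⟩
  calc Jfun m ν a Q ≤ (volume Q).toReal ^ a := Jfun_le_volume_rpow Q
    _ ≤ ((2 * r) ^ m) ^ a := Real.rpow_le_rpow ENNReal.toReal_nonneg
        (ENNReal.toReal_le_of_le_ofReal (by positivity) (hvol Q hQ)) ha.le

theorem exists_isCubePartition_card_eq_partCount [IsZeroOrProbabilityMeasure ν] (hm : 0 < m)
    (ha : 0 < a) {t : ℝ} (ht : 0 < t) :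
    ∃ P : Finset (Set (Fin m → ℝ)), IsCubePartition m P ∧
      (∀ Q ∈ P, Jfun m ν a Q < 1 / t) ∧ P.card = partCount m ν a t := by
  obtain ⟨P, hP, hJ⟩ := exists_isCubePartition_forall_Jfun_lt (ν := ν) hm ha (one_div_pos.2 ht)
  exact Nat.sInf_mem (s := {k | ∃ P : Finset (Set (Fin m → ℝ)), IsCubePartition m P ∧
    (∀ Q ∈ P, Jfun m ν a Q < 1 / t) ∧ P.card = k}) ⟨_, P, hP, hJ, rfl⟩

theorem partCount_le_s2 {n : ℕ} (hn : 1 ≤ n) {t : ℝ} (h : gammaA m ν a n < 1 / t) :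
    partCount m ν a t ≤ n := by
  rw [gammaA] at h
  obtain ⟨_, ⟨P, hP, hPn, rfl⟩, hlt⟩ := exists_lt_of_csInf_lt
    (by exact ⟨_, {unitCube m}, isCubePartition_singleton m, by simpa using hn, rfl⟩) h
  refine (Nat.sInf_le ?_ : partCount m ν a t ≤ P.card).trans hPn
  exact ⟨P, hP, (sSup_Jfun_lt_iff hP).1 hlt, rfl⟩

theorem lt_partCount [IsZeroOrProbabilityMeasure ν] (hm : 0 < m) (ha : 0 < a) {t : ℝ}
    (ht : 0 < t) {n : ℕ} (h : 1 / t < gammaA m ν a n) : n < partCount m ν a t := by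
  obtain ⟨P, hP, hJ, hcard⟩ := exists_isCubePartition_card_eq_partCount (ν := ν) hm ha ht
  refine not_le.1 fun hle => h.not_ge ?_
  exact ((gammaA_le hP (hcard ▸ hle)).trans_lt ((sSup_Jfun_lt_iff hP).2 hJ)).le

theorem isCountingFunction_gammaA [IsZeroOrProbabilityMeasure ν] (hm : 0 < m) (ha : 0 < a) :
    IsCountingFunction (gammaA m ν a) (partCount m ν a) :=
  ⟨fun _ _ _ hn h => partCount_le_s2 hn h, fun _ ht _ h => lt_partCount hm ha ht h⟩

end CubePartitions

theorem statement2_general (m : ℕ) (hm : 0 < m) (ν : Measure (Fin m → ℝ))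
    [IsProbabilityMeasure ν] (a : ℝ) (ha : 0 < a) :
    hPart m ν a = (alphaA m ν a)⁻¹ :=
  (isCountingFunction_gammaA hm ha).limsup_log_div_log_eq_inv_liminf gammaA_nonneg

/-- **Proposition 2.3**: `h_a = 1/α_a`, with the extended-real conventions
`1/0 = ∞` and `1/∞ = 0`. -/
theorem statement2 (m : ℕ) (hm : 0 < m) (ν : Measure (Fin m → ℝ))
    [IsProbabilityMeasure ν] (hν : ν (unitCube m) = 1) (a : ℝ) (ha : 0 < a) :
    hPart m ν a = (alphaA m ν a)⁻¹ :=
  statement2_general m hm ν a ha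
end
end

section
/- For every b > 0 the following three conditions are equivalent: (i) s_b = m/(m+b); (ii) β_ν(s) = m·(1−s) for some s ∈ (0,1); (iii) β_ν(s) = m·(1−s) for all s ∈ (0,1). In particular, with ρ := q(ℓ − m/p) > 0 and q ≥ p > 1, one has −1/(q·s_ρ) = −ℓ/m + 1/p − 1/q if and only if β_ν(s) = m·(1−s) for some (hence all) s ∈ (0,1) (second claim in Remark 1.2). -/
/-!
For `s ∈ (0,1]`, `β_n^ν(s)` is `log (∑_C ν(C)^s) / (n log 2)` with the sum over the `2^{nm}`
cubes of generation `n` inside `(0,1]^m`. Hölder's inequality makes `s ↦ log ∑_C ν(C)^s` convex,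
and since the `ν(C)` form a probability vector, `1 ≤ ∑_C ν(C)^s ≤ 2^{nm(1-s)}`. Passing to the
limsup, `β_ν` is convex on `(0,1]` and lies below the line `m(1-s)`; a convex function lying
below a line and touching it at an interior point coincides with it.

The line `m(1-s)` crosses `b·s` at `s = m/(m+b)`. If `β_ν` is strictly below the line there, by
continuity `β_ν(s) < b·s` also slightly to the left, so `s_b < m/(m+b)`; if `β_ν` equals the line,
`β_ν(s) > b·s` for all `s < m/(m+b)`, so `s_b = m/(m+b)`. The second claim is the case
`b = ρ`, since `-1/(q·m/(m+ρ)) = -ℓ/m + 1/p - 1/q`.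
-/

open MeasureTheory Filter
open scoped ENNReal

noncomputable section

section PowerSums

variable {ι : Type*} {S : Finset ι} {w : ι → ℝ}

lemma one_le_sum_rpow (hw : ∀ i, 0 ≤ w i) (hsum : ∑ i ∈ S, w i = 1) {s : ℝ} (hs : s ≤ 1) :
    1 ≤ ∑ i ∈ S, w i ^ s :=
  hsum ▸ Finset.sum_le_sum fun i hi =>
    Real.self_le_rpow_of_le_one (hw i) (hsum ▸ Finset.single_le_sum (fun j _ => hw j) hi) hs

lemma sum_rpow_le_card_rpow (hw : ∀ i, 0 ≤ w i) (hsum : ∑ i ∈ S, w i = 1) {s : ℝ}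
    (hs : 0 < s) (hs1 : s ≤ 1) : ∑ i ∈ S, w i ^ s ≤ (S.card : ℝ) ^ (1 - s) := by
  have key := Real.inner_le_weight_mul_Lp_of_nonneg S (p := 1 / s)
    (by rw [le_div_iff₀ hs]; simpa using hs1) (fun _ => 1) (fun i => w i ^ s)
    (fun _ => zero_le_one) (fun i => Real.rpow_nonneg (hw i) s)
  simpa [Real.rpow_rpow_inv (hw _) hs.ne', hsum] using key

/-- Hölder's inequality with exponents `1/a` and `1/b`. -/
lemma sum_rpow_add_le_rpow_mul_rpow (hw : ∀ i, 0 ≤ w i) {x y a b : ℝ} (hx : 0 ≤ x) (hy : 0 ≤ y)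
    (ha : 0 < a) (hb : 0 < b) (hab : a + b = 1) :
    ∑ i ∈ S, w i ^ (a * x + b * y) ≤ (∑ i ∈ S, w i ^ x) ^ a * (∑ i ∈ S, w i ^ y) ^ b := by
  have hpq : (1 / a).HolderConjugate (1 / b) := by
    rw [Real.holderConjugate_iff]
    refine ⟨by rw [lt_div_iff₀ ha]; linarith, by simp [hab]⟩
  have holder := Real.inner_le_Lp_mul_Lq_of_nonneg S hpq
    (f := fun i => w i ^ (a * x)) (g := fun i => w i ^ (b * y))
    (fun i _ => Real.rpow_nonneg (hw i) _) (fun i _ => Real.rpow_nonneg (hw i) _)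
  have hpow : ∀ i {c z : ℝ}, 0 < c → (w i ^ (c * z)) ^ (1 / c) = w i ^ z := fun i c z hc => by
    rw [← Real.rpow_mul (hw i), mul_one_div, mul_div_cancel_left₀ z hc.ne']
  have hmul : ∀ i, w i ^ (a * x) * w i ^ (b * y) = w i ^ (a * x + b * y) := fun i =>
    (Real.rpow_add_of_nonneg (hw i) (by positivity) (by positivity)).symm
  simpa only [hmul, hpow _ ha, hpow _ hb, one_div_one_div] using holder

lemma convexOn_log_sum_rpow (hw : ∀ i, 0 ≤ w i) (hpos : ∃ i ∈ S, 0 < w i) :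
    ConvexOn ℝ (Set.Ici 0) fun s : ℝ => Real.log (∑ i ∈ S, w i ^ s) := by
  have hsum_pos : ∀ s : ℝ, 0 < ∑ i ∈ S, w i ^ s := fun s =>
    let ⟨i, hi, hwi⟩ := hpos
    Finset.sum_pos' (fun j _ => Real.rpow_nonneg (hw j) s) ⟨i, hi, Real.rpow_pos_of_pos hwi s⟩
  refine convexOn_iff_forall_pos.2 ⟨convex_Ici 0, fun x hx y hy a b ha hb hab => ?_⟩
  simp only [smul_eq_mul]
  calc Real.log (∑ i ∈ S, w i ^ (a * x + b * y))
      ≤ Real.log ((∑ i ∈ S, w i ^ x) ^ a * (∑ i ∈ S, w i ^ y) ^ b) :=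
        Real.log_le_log (hsum_pos _) (sum_rpow_add_le_rpow_mul_rpow hw hx hy ha hb hab)
    _ = a * Real.log (∑ i ∈ S, w i ^ x) + b * Real.log (∑ i ∈ S, w i ^ y) := by
        rw [Real.log_mul (Real.rpow_pos_of_pos (hsum_pos x) a).ne'
          (Real.rpow_pos_of_pos (hsum_pos y) b).ne', Real.log_rpow (hsum_pos x),
          Real.log_rpow (hsum_pos y)]

end PowerSums

lemma convexOn_limsup {E : Type*} [AddCommGroup E] [Module ℝ E] {S : Set E} {f : ℕ → E → ℝ}
    (hf : ∀ n, ConvexOn ℝ S (f n)) (hbddAbove : ∀ x ∈ S, BddAbove (Set.range fun n => f n x))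
    (hbddBelow : ∀ x ∈ S, BddBelow (Set.range fun n => f n x)) :
    ConvexOn ℝ S fun x => limsup (fun n => f n x) atTop := by
  refine ⟨(hf 0).1, fun x hx y hy a b ha hb hab => ?_⟩
  simp only [smul_eq_mul]
  refine le_of_forall_pos_le_add fun ε hε => ?_
  have hfx := eventually_lt_of_limsup_lt (f := atTop)
    (lt_add_of_pos_right (limsup (fun n => f n x) atTop) hε)
    (hbddAbove x hx).isBoundedUnder_of_range
  have hfy := eventually_lt_of_limsup_lt (f := atTop)
    (lt_add_of_pos_right (limsup (fun n => f n y) atTop) hε)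
    (hbddAbove y hy).isBoundedUnder_of_range
  refine limsup_le_of_le
    (hbddBelow _ ((hf 0).1 hx hy ha hb hab)).isBoundedUnder_of_range.isCoboundedUnder_flip ?_
  filter_upwards [hfx, hfy] with n hfxn hfyn
  calc f n (a • x + b • y) ≤ a * f n x + b * f n y := (hf n).2 hx hy ha hb hab
    _ ≤ a * (limsup (fun n => f n x) atTop + ε) + b * (limsup (fun n => f n y) atTop + ε) := by
        gcongr
    _ = _ := by linear_combination ε * hab

theorem ConvexOn.eqOn_of_le_of_eq {f g : ℝ → ℝ} {a b x₀ : ℝ} (hf : ConvexOn ℝ (Set.Ioo a b) f)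
    (hg : ConcaveOn ℝ (Set.Ioo a b) g) (hle : ∀ x ∈ Set.Ioo a b, f x ≤ g x)
    (hx₀ : x₀ ∈ Set.Ioo a b) (heq : f x₀ = g x₀) : Set.EqOn f g (Set.Ioo a b) := by
  obtain ⟨hax₀, hx₀b⟩ := hx₀
  have hd : ConvexOn ℝ (Set.Ioo a b) (f - g) := hf.sub hg
  have h0 : (f - g) x₀ = 0 := sub_eq_zero.2 heq
  have hmax : ∀ y ∈ Set.Ioo a b, (f - g) y ≤ (f - g) x₀ := fun y hy => by
    rw [h0]
    exact sub_nonpos.2 (hle y hy)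
  intro x hx
  suffices (f - g) x₀ ≤ (f - g) x from le_antisymm (hle x hx) (sub_nonneg.1 (h0 ▸ this))
  rcases lt_trichotomy x x₀ with hlt | rfl | hgt
  · have hy : (x₀ + b) / 2 ∈ Set.Ioo a b := ⟨by linarith, by linarith⟩
    exact hd.le_left_of_right_le'' hx hy hlt.le (by linarith) (hmax _ hy)
  · exact le_rfl
  · have hy : (a + x₀) / 2 ∈ Set.Ioo a b := ⟨by linarith, by linarith⟩
    exact hd.le_right_of_left_le'' hy hx (by linarith) hgt.le (hmax _ hy)

namespace DyadicSpectrum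

section Cubes

variable {m n : ℕ}

def dyadicIndex (n : ℕ) (x : Fin m → ℝ) : Fin m → ℤ := fun i => ⌈(2 : ℝ) ^ n * x i⌉ - 1

lemma mem_dyadicCube_iff {l : Fin m → ℤ} {x : Fin m → ℝ} :
    x ∈ dyadicCube m n l ↔ dyadicIndex n x = l := by
  have h2 : (0 : ℝ) < 2 ^ n := by positivity
  simp only [dyadicCube, Set.mem_ofPred_eq, Set.mem_Ioc, funext_iff, dyadicIndex,
    sub_eq_iff_eq_add, Int.ceil_eq_iff, Int.cast_add, Int.cast_one, add_sub_cancel_right,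
    div_lt_iff₀ h2, le_div_iff₀ h2, mul_comm (x _)]

lemma measurableSet_dyadicCube (l : Fin m → ℤ) : MeasurableSet (dyadicCube m n l) := by
  rw [dyadicCube, Set.ofPred_forall]
  exact MeasurableSet.iInter fun i => measurable_pi_apply i measurableSet_Ioc

lemma measurableSet_unitCube : MeasurableSet (unitCube m) := by
  rw [unitCube, Set.ofPred_forall]
  exact MeasurableSet.iInter fun i => measurable_pi_apply i measurableSet_Ioc

def unitCubeIndices (m n : ℕ) : Finset (Fin m → ℤ) :=
  Fintype.piFinset fun _ => Finset.Icc 0 (2 ^ n - 1)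

lemma card_unitCubeIndices : (unitCubeIndices m n).card = 2 ^ (n * m) := by
  simp [unitCubeIndices, Fintype.card_piFinset, pow_mul]
  norm_cast

lemma dyadicIndex_mem_unitCubeIndices {x : Fin m → ℝ} (hx : x ∈ unitCube m) :
    dyadicIndex n x ∈ unitCubeIndices m n := by
  refine Fintype.mem_piFinset.2 fun i => Finset.mem_Icc.2 ?_
  obtain ⟨h0, h1⟩ := hx i
  have hpos : 0 < ⌈(2 : ℝ) ^ n * x i⌉ := Int.ceil_pos.2 (by positivity)
  have hle : ⌈(2 : ℝ) ^ n * x i⌉ ≤ 2 ^ n :=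
    Int.ceil_le.2 (by push_cast; exact mul_le_of_le_one_right (by positivity) h1)
  simp only [dyadicIndex]
  omega

lemma pairwiseDisjoint_dyadicCube :
    (Set.univ : Set (Fin m → ℤ)).PairwiseDisjoint (dyadicCube m n) := by
  intro l _ l' _ hll'
  refine Set.disjoint_left.2 fun _ hx hx' => hll' ?_
  rw [mem_dyadicCube_iff] at hx hx'
  exact hx.symm.trans hx'

lemma unitCube_subset_biUnion_dyadicCube :
    unitCube m ⊆ ⋃ l ∈ unitCubeIndices m n, dyadicCube m n l :=
  fun _ hx => Set.mem_biUnion (dyadicIndex_mem_unitCubeIndices hx) (mem_dyadicCube_iff.2 rfl)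

lemma disjoint_dyadicCube_unitCube {l : Fin m → ℤ} (hl : l ∉ unitCubeIndices m n) :
    Disjoint (dyadicCube m n l) (unitCube m) :=
  Set.disjoint_left.2 fun _ hx hx' =>
    hl (mem_dyadicCube_iff.1 hx ▸ dyadicIndex_mem_unitCubeIndices hx')

end Cubes

section Measure

variable {m n : ℕ} {ν : Measure (Fin m → ℝ)} [IsProbabilityMeasure ν]

lemma measure_dyadicCube_eq_zero (hν : ν (unitCube m) = 1) {l : Fin m → ℤ}
    (hl : l ∉ unitCubeIndices m n) : ν (dyadicCube m n l) = 0 :=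
  measure_mono_null (disjoint_dyadicCube_unitCube hl).subset_compl_right
    (by rw [prob_compl_eq_one_sub measurableSet_unitCube, hν, tsub_self])

lemma sum_measure_dyadicCube (hν : ν (unitCube m) = 1) :
    ∑ l ∈ unitCubeIndices m n, ν (dyadicCube m n l) = 1 := by
  rw [← measure_biUnion_finset (pairwiseDisjoint_dyadicCube.subset (Set.subset_univ _))
    fun l _ => measurableSet_dyadicCube l]
  exact le_antisymm prob_le_one (hν ▸ measure_mono unitCube_subset_biUnion_dyadicCube)

lemma sum_toReal_measure_dyadicCube (hν : ν (unitCube m) = 1) :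
    ∑ l ∈ unitCubeIndices m n, (ν (dyadicCube m n l)).toReal = 1 := by
  rw [← ENNReal.toReal_sum fun l _ => measure_ne_top ν _, sum_measure_dyadicCube hν,
    ENNReal.toReal_one]

lemma betaN_eq (hν : ν (unitCube m) = 1) {s : ℝ} (hs : 0 < s) :
    betaN m ν n s = Real.log (∑ l ∈ unitCubeIndices m n, (ν (dyadicCube m n l)).toReal ^ s)
      / (n * Real.log 2) := by
  have hsupp : Function.support (fun l => (ν (dyadicCube m n l)).toReal ^ s)
      ⊆ {l | 0 < ν (dyadicCube m n l)} := fun l hl =>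
    show 0 < ν (dyadicCube m n l) from
      pos_iff_ne_zero.2 fun h => hl (by simp [h, Real.zero_rpow hs.ne'])
  have htsum : ∑' l : {l // 0 < ν (dyadicCube m n l)}, (ν (dyadicCube m n l.1)).toReal ^ s
      = ∑ l ∈ unitCubeIndices m n, (ν (dyadicCube m n l)).toReal ^ s :=
    (tsum_subtype_eq_of_support_subset hsupp).trans <| tsum_eq_sum fun l hl => by
      simp [measure_dyadicCube_eq_zero hν hl, Real.zero_rpow hs.ne']
  rw [betaN, htsum, Real.log_pow]

end Measure

section Spectrum

variable {m : ℕ} {ν : Measure (Fin m → ℝ)} [IsProbabilityMeasure ν]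

lemma convexOn_betaN (hν : ν (unitCube m) = 1) (n : ℕ) :
    ConvexOn ℝ (Set.Ioi 0) (betaN m ν n) := by
  have hpos : ∃ l ∈ unitCubeIndices m n, 0 < (ν (dyadicCube m n l)).toReal :=
    Finset.exists_lt_of_sum_lt (by simp [sum_toReal_measure_dyadicCube hν])
  refine ((convexOn_log_sum_rpow (w := fun l => (ν (dyadicCube m n l)).toReal)
    (fun _ => ENNReal.toReal_nonneg) hpos).subset Set.Ioi_subset_Ici_self (convex_Ioi 0) |>.smul
    (inv_nonneg.2 (by positivity : (0 : ℝ) ≤ n * Real.log 2))).congr fun s hs => ?_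
  simp only [betaN_eq hν hs, smul_eq_mul, div_eq_inv_mul]

lemma betaN_nonneg (hν : ν (unitCube m) = 1) (n : ℕ) {s : ℝ} (hs : s ∈ Set.Ioc 0 1) :
    0 ≤ betaN m ν n s := by
  rw [betaN_eq hν hs.1]
  exact div_nonneg (Real.log_nonneg (one_le_sum_rpow (fun _ => ENNReal.toReal_nonneg)
    (sum_toReal_measure_dyadicCube hν) hs.2)) (by positivity)

lemma betaN_le (hν : ν (unitCube m) = 1) (n : ℕ) {s : ℝ} (hs : s ∈ Set.Ioc 0 1) :
    betaN m ν n s ≤ m * (1 - s) := by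
  rw [betaN_eq hν hs.1]
  refine div_le_of_le_mul₀ (by positivity) (mul_nonneg (Nat.cast_nonneg m) (by linarith [hs.2]))
    ?_
  have hsum := sum_toReal_measure_dyadicCube (n := n) hν
  have hone := one_le_sum_rpow (fun _ => ENNReal.toReal_nonneg) hsum hs.2
  calc Real.log (∑ l ∈ unitCubeIndices m n, (ν (dyadicCube m n l)).toReal ^ s)
      ≤ Real.log (((unitCubeIndices m n).card : ℝ) ^ (1 - s)) :=
        Real.log_le_log (by linarith)
          (sum_rpow_le_card_rpow (fun _ => ENNReal.toReal_nonneg) hsum hs.1 hs.2)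
    _ = m * (1 - s) * (n * Real.log 2) := by
        rw [card_unitCubeIndices, Real.log_rpow (by positivity), Nat.cast_pow, Real.log_pow]
        push_cast
        ring

lemma convexOn_lqSpectrum (hν : ν (unitCube m) = 1) :
    ConvexOn ℝ (Set.Ioc 0 1) (lqSpectrum m ν) :=
  convexOn_limsup (fun n => (convexOn_betaN hν n).subset Set.Ioc_subset_Ioi_self (convex_Ioc 0 1))
    (fun _ hs => ⟨_, Set.forall_mem_range.2 fun n => betaN_le hν n hs⟩)
    (fun _ hs => ⟨0, Set.forall_mem_range.2 fun n => betaN_nonneg hν n hs⟩)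

lemma lqSpectrum_le (hν : ν (unitCube m) = 1) {s : ℝ} (hs : s ∈ Set.Ioc 0 1) :
    lqSpectrum m ν s ≤ m * (1 - s) :=
  limsup_le_of_le (isBoundedUnder_of ⟨0, fun n => betaN_nonneg hν n hs⟩).isCoboundedUnder_flip
    (Eventually.of_forall fun n => betaN_le hν n hs)

end Spectrum

open Topology

section AffineMajorant

variable {β : ℝ → ℝ} {M : ℝ}

lemma eqOn_of_exists_eq (hβ : ConvexOn ℝ (Set.Ioo 0 1) β)
    (hle : ∀ s ∈ Set.Ioo (0 : ℝ) 1, β s ≤ M * (1 - s))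
    (h : ∃ s ∈ Set.Ioo (0 : ℝ) 1, β s = M * (1 - s)) :
    ∀ s ∈ Set.Ioo (0 : ℝ) 1, β s = M * (1 - s) := by
  obtain ⟨s₀, hs₀, heq⟩ := h
  have hconc : ConcaveOn ℝ (Set.Ioo 0 1) fun s => M * (1 - s) :=
    ⟨convex_Ioo 0 1, fun x _ y _ a b _ _ hab => le_of_eq <| by
      simp only [smul_eq_mul]; linear_combination M * hab⟩
  exact hβ.eqOn_of_le_of_eq hconc hle hs₀ heq

lemma sInf_eq_div_iff (hβ : ConvexOn ℝ (Set.Ioo 0 1) β)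
    (hle : ∀ s ∈ Set.Ioo (0 : ℝ) 1, β s ≤ M * (1 - s)) (hM : 0 < M) {b : ℝ} (hb : 0 < b) :
    sInf {s | 0 < s ∧ β s - b * s ≤ 0} = M / (M + b) ↔
      ∃ s ∈ Set.Ioo (0 : ℝ) 1, β s = M * (1 - s) := by
  set S := {s | 0 < s ∧ β s - b * s ≤ 0}
  have hMb : 0 < M + b := by linarith
  set s₀ := M / (M + b)
  have hs₀ : s₀ ∈ Set.Ioo 0 1 := ⟨div_pos hM hMb, (div_lt_one hMb).2 (by linarith)⟩
  have hMs₀ : (M + b) * s₀ = M := mul_div_cancel₀ M hMb.ne'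
  constructor
  · intro hinf
    refine ⟨s₀, hs₀, le_antisymm (hle s₀ hs₀) (not_lt.1 fun hlt => ?_)⟩
    -- `β - b·id` is continuous and negative at `s₀`, so `S` has points left of `s₀`.
    have hcont : ContinuousAt (fun s => β s - b * s) s₀ :=
      ((hβ.continuousOn isOpen_Ioo).continuousAt (Ioo_mem_nhds hs₀.1 hs₀.2)).sub
        (continuousAt_const.mul continuousAt_id)
    have hnear : ∀ᶠ s in 𝓝 s₀, 0 < s ∧ β s - b * s < 0 :=
      (lt_mem_nhds hs₀.1).and (hcont.eventually (gt_mem_nhds (by linarith)))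
    obtain ⟨x, ⟨hx0, hxneg⟩, hxlt⟩ := ((hnear.filter_mono nhdsWithin_le_nhds).and
      (eventually_mem_nhdsWithin (s := Set.Iio s₀))).exists
    have hxS : sInf S ≤ x := csInf_le ⟨0, fun _ hs => hs.1.le⟩ ⟨hx0, hxneg.le⟩
    exact not_lt.2 hxS (hinf ▸ hxlt)
  · intro h
    have hall := eqOn_of_exists_eq hβ hle h
    refine IsLeast.csInf_eq ⟨⟨hs₀.1, ?_⟩, fun y hy => not_lt.1 fun hlt => ?_⟩
    · rw [hall s₀ hs₀]
      linarith
    · have hy' := hy.2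
      rw [hall y ⟨hy.1, hlt.trans hs₀.2⟩] at hy'
      nlinarith [mul_lt_mul_of_pos_left hlt hMb]

end AffineMajorant

lemma ite_eq_coe_neg_one_div_iff {q x y : ℝ} (hq : q ≠ 0) (hy : y ≠ 0) :
    ((if x = 0 then (⊥ : EReal) else ((-1 / (q * x) : ℝ) : EReal)) = ((-1 / (q * y) : ℝ) : EReal))
      ↔ x = y := by
  split_ifs with hx
  · simp [hx, hy.symm]
  · rw [EReal.coe_eq_coe_iff, neg_div, neg_div, neg_inj, one_div, one_div, inv_inj,
      mul_right_inj' hq]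

end DyadicSpectrum

open DyadicSpectrum in
/-- **Remark 1.2 (second claim)**: for every `b > 0` the conditions
(i) `s_b = m/(m+b)`, (ii) `β_ν(s) = m(1-s)` for some `s ∈ (0,1)`, and
(iii) `β_ν(s) = m(1-s)` for all `s ∈ (0,1)` are equivalent; in particular, with
`ρ = q(ℓ - m/p) > 0`, `q ≥ p > 1`, one has `-1/(q·s_ρ) = -ℓ/m + 1/p - 1/q`
(`-∞` if `s_ρ = 0`) if and only if `β_ν(s) = m(1-s)` for some (hence all)
`s ∈ (0,1)`. -/
theorem statement10 (m : ℕ) (hm : 0 < m) (ν : Measure (Fin m → ℝ))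
    [IsProbabilityMeasure ν] (hν : ν (unitCube m) = 1) :
    (∀ b : ℝ, 0 < b →
      ((sb m ν b = (m : ℝ) / ((m : ℝ) + b)) ↔
        ∃ s ∈ Set.Ioo (0 : ℝ) 1, lqSpectrum m ν s = (m : ℝ) * (1 - s)) ∧
      ((∃ s ∈ Set.Ioo (0 : ℝ) 1, lqSpectrum m ν s = (m : ℝ) * (1 - s)) ↔
        ∀ s ∈ Set.Ioo (0 : ℝ) 1, lqSpectrum m ν s = (m : ℝ) * (1 - s))) ∧
    ∀ p q : ℝ, ∀ ℓ : ℕ, p ≤ q → 1 < p → 0 < q * ((ℓ : ℝ) - (m : ℝ) / p) →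
      ((if sb m ν (q * ((ℓ : ℝ) - (m : ℝ) / p)) = 0 then (⊥ : EReal)
          else ((-1 / (q * sb m ν (q * ((ℓ : ℝ) - (m : ℝ) / p))) : ℝ) : EReal))
        = ((-(ℓ : ℝ) / (m : ℝ) + 1 / p - 1 / q : ℝ) : EReal) ↔
      ∃ s ∈ Set.Ioo (0 : ℝ) 1, lqSpectrum m ν s = (m : ℝ) * (1 - s)) := by
  have hM : (0 : ℝ) < m := Nat.cast_pos.2 hm
  have hβ : ConvexOn ℝ (Set.Ioo 0 1) (lqSpectrum m ν) :=
    (convexOn_lqSpectrum hν).subset Set.Ioo_subset_Ioc_self (convex_Ioo 0 1)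
  have hle : ∀ s ∈ Set.Ioo (0 : ℝ) 1, lqSpectrum m ν s ≤ m * (1 - s) :=
    fun s hs => lqSpectrum_le hν (Set.Ioo_subset_Ioc_self hs)
  have hsb : ∀ b : ℝ, 0 < b → (sb m ν b = m / (m + b) ↔
      ∃ s ∈ Set.Ioo (0 : ℝ) 1, lqSpectrum m ν s = m * (1 - s)) :=
    fun b hb => sInf_eq_div_iff hβ hle hM hb
  refine ⟨fun b hb => ⟨hsb b hb, eqOn_of_exists_eq hβ hle,
    fun h => ⟨1 / 2, by norm_num, h _ (by norm_num)⟩⟩, fun p q ℓ _ hp hρ => ?_⟩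
  have hq : q ≠ 0 := left_ne_zero_of_mul hρ.ne'
  have hMρ : (m : ℝ) + q * (ℓ - m / p) ≠ 0 := by positivity
  rw [← hsb _ hρ, show -(ℓ : ℝ) / m + 1 / p - 1 / q = -1 / (q * (m / (m + q * (ℓ - m / p)))) by
    field_simp
    ring]
  exact ite_eq_coe_neg_one_div_iff hq (div_ne_zero hM.ne' hMρ)
end
end
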